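/- Let T be a rooted tree with positive edge lengths and minimum edge length Δ. Suppose the estimated distances d̂ between terminal nodes satisfy |d̂(i,j) − d(i,j)| < Δ/4 for all pairs of terminal nodes i, j. Define ρ̂(i,j) = (d̂(s,i) + d̂(s,j) − d̂(i,j))/2. Then for all leaves i, j, k: if lca(i,j) strictly descends from lca(i,k) then ρ̂(i,j) − ρ̂(i,k) > Δ/2, and if lca(i,j) = lca(i,k) then |ρ̂(i,j) − ρ̂(i,k)| ≤ Δ/2. -/

import Mathlib

/-- A finite rooted tree, given by a parent function on a finite vertex set.
The root `s` is its own parent, every vertex reaches the root by iterating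
`parent`, and `lca i j` is the nearest (lowest) common ancestor of `i` and `j`:
it is a common ancestor, and every common ancestor of `i` and `j` is an
ancestor of it. -/
structure TreeShape where
  V : Type
  fintypeV : Fintype V
  decEqV : DecidableEq V
  s : V
  parent : V → V
  parent_root : parent s = s
  reach : ∀ v, ∃ n, parent^[n] v = s
  lca : V → V → V
  lca_comm : ∀ i j, lca i j = lca j i
  lca_anc_left : ∀ i j, ∃ n, parent^[n] i = lca i j
  lca_anc_right : ∀ i j, ∃ n, parent^[n] j = lca i j
  lca_greatest : ∀ i j a, (∃ n, parent^[n] i = a) → (∃ n, parent^[n] j = a) →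
      ∃ n, parent^[n] (lca i j) = a

attribute [instance] TreeShape.fintypeV TreeShape.decEqV

namespace TreeShape
variable (S : TreeShape)

/-- `a` is an ancestor of `v` (possibly `a = v`). -/
def IsAncestor (a v : S.V) : Prop := ∃ n, S.parent^[n] v = a

/-- A leaf: a non-root vertex with no children. -/
def IsLeaf (v : S.V) : Prop := v ≠ S.s ∧ ∀ u, S.parent u ≠ v

/-- Terminal nodes: the root (source) together with the leaves (destinations). -/
def Terminal (v : S.V) : Prop := v = S.s ∨ S.IsLeaf v

/-- Two distinct non-root vertices are siblings if they share the same parent. -/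
def Siblings (i j : S.V) : Prop := i ≠ j ∧ i ≠ S.s ∧ j ≠ S.s ∧ S.parent i = S.parent j

end TreeShape

/-- An additive metric on a rooted tree: each edge `(parent v, v)` (for `v ≠ s`)
carries a positive finite length `w v`, and `D v` is the sum of the edge lengths
on the path from the root `s` down to `v`. -/
structure AddMetric (S : TreeShape) where
  w : S.V → ℝ
  w_pos : ∀ v, v ≠ S.s → 0 < w v
  D : S.V → ℝ
  D_root : D S.s = 0
  D_step : ∀ v, v ≠ S.s → D v = D (S.parent v) + w v

namespace AddMetric
variable {S : TreeShape} (d : AddMetric S)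

/-- The induced path distance on the tree: the sum of the edge lengths on the
unique path between `i` and `j`, which goes through `lca i j`. -/
def dist (i j : S.V) : ℝ := d.D i + d.D j - 2 * d.D (S.lca i j)

/-- `rho i j` is the distance from the root to the nearest common ancestor. -/
def rho (i j : S.V) : ℝ := d.D (S.lca i j)

end AddMetric

/-!
On the tree, `ρ(i,j)` is the Gromov product of the leaves `i, j` at the root `s` for the tree
distance `d`, and `ρ̂` is the same expression in `d̂`. In `ρ̂(i,j) − ρ̂(i,k)` the term `d̂(s,i)`
cancels, so it differs from `ρ(i,j) − ρ(i,k)` by less than `4 · (Δ/4) / 2 = Δ/2`. A strict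
ancestor lies at least one edge, hence at least `Δ`, closer to the root, so the true difference
is `≥ Δ` in the first case and `0` in the second.
-/

noncomputable def gromovProduct {α : Type*} (f : α → α → ℝ) (s i j : α) : ℝ :=
  (f s i + f s j - f i j) / 2

theorem abs_sub_gromovProduct_sub_lt {α : Type*} {f g : α → α → ℝ} {ε : ℝ} {s i j k : α}
    (hsj : |f s j - g s j| < ε) (hij : |f i j - g i j| < ε)
    (hsk : |f s k - g s k| < ε) (hik : |f i k - g i k| < ε) :
    |(gromovProduct f s i j - gromovProduct f s i k) -
      (gromovProduct g s i j - gromovProduct g s i k)| < 2 * ε := by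
  unfold gromovProduct
  rw [abs_lt] at hsj hij hsk hik ⊢
  constructor <;> linarith [hsj.1, hsj.2, hij.1, hij.2, hsk.1, hsk.2, hik.1, hik.2]

namespace TreeShape

theorem lca_root_left (S : TreeShape) (x : S.V) : S.lca S.s x = S.s := by
  obtain ⟨n, hn⟩ := S.lca_anc_left S.s x
  rwa [Function.iterate_fixed S.parent_root, eq_comm] at hn

end TreeShape

namespace AddMetric

variable {S : TreeShape} (d : AddMetric S)

theorem dist_root_left (x : S.V) : d.dist S.s x = d.D x := by
  simp [dist, S.lca_root_left, d.D_root]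

theorem rho_eq_gromovProduct (i j : S.V) : d.rho i j = gromovProduct d.dist S.s i j := by
  rw [rho, gromovProduct, dist_root_left, dist_root_left, dist]
  ring

theorem D_iterate_parent_le (n : ℕ) (v : S.V) : d.D (S.parent^[n] v) ≤ d.D v := by
  induction n generalizing v with
  | zero => rfl
  | succ n ih =>
    rw [Function.iterate_succ_apply]
    by_cases hv : v = S.s
    · rw [hv, S.parent_root]
      exact ih S.s
    · linarith [ih (S.parent v), d.D_step v hv, d.w_pos v hv]

theorem D_add_le_of_isAncestor_of_ne {Δ : ℝ} (hΔle : ∀ v, v ≠ S.s → Δ ≤ d.w v)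
    {a v : S.V} (hanc : S.IsAncestor a v) (hne : a ≠ v) : d.D a + Δ ≤ d.D v := by
  obtain ⟨n, rfl⟩ := hanc
  cases n with
  | zero => exact absurd rfl hne
  | succ n =>
    have hv : v ≠ S.s := by
      rintro rfl
      exact hne (Function.iterate_fixed S.parent_root _)
    rw [Function.iterate_succ_apply]
    linarith [d.D_iterate_parent_le n (S.parent v), d.D_step v hv, hΔle v hv]

end AddMetric

theorem estimated_rho_separation_general (S : TreeShape) (d : AddMetric S) (Δ : ℝ)
    (hΔle : ∀ v, v ≠ S.s → Δ ≤ d.w v)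
    (dh : S.V → S.V → ℝ)
    (happrox : ∀ i j, S.Terminal i → S.Terminal j →
      |dh i j - d.dist i j| < Δ / 4)
    (i j k : S.V) (hi : S.IsLeaf i) (hj : S.IsLeaf j) (hk : S.IsLeaf k) :
    (S.IsAncestor (S.lca i k) (S.lca i j) ∧ S.lca i j ≠ S.lca i k →
      (dh S.s i + dh S.s j - dh i j) / 2 - (dh S.s i + dh S.s k - dh i k) / 2
        > Δ / 2) ∧
    (S.lca i j = S.lca i k →
      |(dh S.s i + dh S.s j - dh i j) / 2 - (dh S.s i + dh S.s k - dh i k) / 2|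
        ≤ Δ / 2) := by
  have hs : S.Terminal S.s := Or.inl rfl
  have herr := abs_sub_gromovProduct_sub_lt (happrox _ _ hs (Or.inr hj))
    (happrox _ _ (Or.inr hi) (Or.inr hj)) (happrox _ _ hs (Or.inr hk))
    (happrox _ _ (Or.inr hi) (Or.inr hk))
  rw [← d.rho_eq_gromovProduct, ← d.rho_eq_gromovProduct] at herr
  unfold gromovProduct at herr
  constructor
  · rintro ⟨hanc, hne⟩
    have hgap := d.D_add_le_of_isAncestor_of_ne hΔle hanc hne.symm
    unfold AddMetric.rho at herr
    linarith [(abs_lt.mp herr).1]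
  · intro heq
    rw [AddMetric.rho, AddMetric.rho, heq, sub_self, sub_zero] at herr
    linarith

/-- if the estimated distances `d̂` between terminal nodes are
within `Δ/4` of the true additive distances (Δ being the minimum edge length),
then the estimated `ρ̂(i,j) = (d̂(s,i) + d̂(s,j) − d̂(i,j))/2` satisfy: for all
leaves `i, j, k`, if `lca(i,j)` strictly descends from `lca(i,k)` then
`ρ̂(i,j) − ρ̂(i,k) > Δ/2`, and if `lca(i,j) = lca(i,k)` then
`|ρ̂(i,j) − ρ̂(i,k)| ≤ Δ/2`. -/
theorem estimated_rho_separation (S : TreeShape) (d : AddMetric S) (Δ : ℝ)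
    (hΔpos : 0 < Δ)
    (hΔle : ∀ v, v ≠ S.s → Δ ≤ d.w v) (hΔmem : ∃ v, v ≠ S.s ∧ d.w v = Δ)
    (dh : S.V → S.V → ℝ)
    (hsymm : ∀ i j, dh i j = dh j i) (hdiag : ∀ i, dh i i = 0)
    (happrox : ∀ i j, S.Terminal i → S.Terminal j →
      |dh i j - d.dist i j| < Δ / 4)
    (i j k : S.V) (hi : S.IsLeaf i) (hj : S.IsLeaf j) (hk : S.IsLeaf k) :
    (S.IsAncestor (S.lca i k) (S.lca i j) ∧ S.lca i j ≠ S.lca i k →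
      (dh S.s i + dh S.s j - dh i j) / 2 - (dh S.s i + dh S.s k - dh i k) / 2
        > Δ / 2) ∧
    (S.lca i j = S.lca i k →
      |(dh S.s i + dh S.s j - dh i j) / 2 - (dh S.s i + dh S.s k - dh i k) / 2|
        ≤ Δ / 2) :=
  estimated_rho_separation_general S d Δ hΔle dh happrox i j k hi hj hk
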